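/- Strengthened automaton soundness (induction invariant of the Program Automaton Soundness proof): for every NetKAT program p whose dup labels are pairwise distinct, every state ℓ ∈ S of A(p), all packets pk_in, pk₁, …, pk_n (n ≥ 0), pk_out, and every list of packets h', the history (pk_out :: pk_n :: ⋯ :: pk₁) ++ h' (just pk_out :: h' when n = 0) belongs to ⟦k_ℓ⟧ (pk_in :: h') if and only if accept ℓ (pk_in, [pk₁, …, pk_n], pk_out) holds. -/

import Mathlib

/-!
Every program splits as `⟦p⟧ = ⟦E⟦p⟧⟧ ∪ ⋃_{(d, ℓ, k) ∈ D⟦p⟧} ⟦d · dup^ℓ · k⟧`. The local part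
`E⟦p⟧` and every `d` are dup-free, so they change the head packet only, while every program only
prepends packets to the history. Hence a run of `k_s` from `pk_in :: h'` that leaves the tail `h'`
unchanged is an observation `ε s`, and a run that pushes `pk₁` first goes through some
`(d, ℓ, k) ∈ D⟦k_s⟧` with `[pk₁] ∈ ⟦d⟧ [pk_in]`. The continuations in `D⟦k_s⟧` reappear in
`D⟦p⟧`, where distinct labels force `k = k_ℓ`; induction on `pk₁, …, pk_n` concludes.
-/

namespace NetKAT

/-- Packets: assignments of (natural-number) values to fields. -/
abbrev Packet (F : Type) := F → ℕ

/-- Histories: a nonempty list of packets, represented as (head packet, tail). -/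
abbrev Hist (F : Type) := Packet F × List (Packet F)

/-- NetKAT predicates. -/
inductive Pred (F : Type) where
  | id : Pred F
  | drop : Pred F
  | test : F → ℕ → Pred F
  | or : Pred F → Pred F → Pred F
  | and : Pred F → Pred F → Pred F
  | not : Pred F → Pred F
  deriving DecidableEq

/-- Labeled NetKAT programs: every occurrence of `dup` carries a label from `L`. -/
inductive LPol (F L : Type) where
  | filter : Pred F → LPol F L
  | mod : F → ℕ → LPol F L
  | union : LPol F L → LPol F L → LPol F L
  | seq : LPol F L → LPol F L → LPol F L
  | star : LPol F L → LPol F L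
  | dup : L → LPol F L
  deriving DecidableEq

/-- Iterates of a packet-processing function. -/
def iterRel {F : Type} (f : Hist F → Set (Hist F)) : ℕ → Hist F → Set (Hist F)
  | 0, h => {h}
  | i+1, h => ⋃ h' ∈ f h, iterRel f i h'

/-- Semantics of predicates (as filters on histories). -/
def predSem {F : Type} : Pred F → Hist F → Set (Hist F)
  | .id, h => {h}
  | .drop, _ => ∅
  | .test f n, h => if h.1 f = n then {h} else ∅
  | .or a b, h => predSem a h ∪ predSem b h
  | .and a b, h => ⋃ h' ∈ predSem a h, predSem b h'
  | .not a, h => {h} \ predSem a h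

/-- Semantics of labeled NetKAT programs (labels do not affect the semantics). -/
def polSem {F L : Type} [DecidableEq F] : LPol F L → Hist F → Set (Hist F)
  | .filter a, h => predSem a h
  | .mod f n, h => {(Function.update h.1 f n, h.2)}
  | .union p q, h => polSem p h ∪ polSem q h
  | .seq p q, h => ⋃ h' ∈ polSem p h, polSem q h'
  | .star p, h => ⋃ i : ℕ, iterRel (fun h' => polSem p h') i h
  | .dup _, h => {(h.1, h.1 :: h.2)}

/-- A program is dup-free if it contains no occurrence of `dup`. -/
def LPol.dupFree {F L : Type} : LPol F L → Prop
  | .filter _ => True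
  | .mod _ _ => True
  | .union p q => p.dupFree ∧ q.dupFree
  | .seq p q => p.dupFree ∧ q.dupFree
  | .star p => p.dupFree
  | .dup _ => False

/-- The list of dup labels occurring in a program. -/
def labelList {F L : Type} : LPol F L → List L
  | .filter _ => []
  | .mod _ _ => []
  | .union p q => labelList p ++ labelList q
  | .seq p q => labelList p ++ labelList q
  | .star p => labelList p
  | .dup l => [l]

variable {F L : Type} [DecidableEq F] [DecidableEq L]

/-- The local component `E⟦p⟧` of a program. -/
def EE : LPol F L → LPol F L
  | .filter a => .filter a
  | .mod f n => .mod f n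
  | .union q r => .union (EE q) (EE r)
  | .seq q r => .seq (EE q) (EE r)
  | .star q => .star (EE q)
  | .dup _ => .filter .drop

/-- The global components `D⟦p⟧` of a program: a finite set of triples `(d, ℓ, k)`. -/
def DD : LPol F L → Finset (LPol F L × L × LPol F L)
  | .filter _ => ∅
  | .mod _ _ => ∅
  | .union q r => DD q ∪ DD r
  | .seq q r =>
      (DD q).image (fun t => (t.1, t.2.1, LPol.seq t.2.2 r)) ∪
      (DD r).image (fun t => (LPol.seq (EE q) t.1, t.2.1, t.2.2))
  | .star q =>
      (DD q).image (fun t => (LPol.seq (EE (.star q)) t.1, t.2.1, LPol.seq t.2.2 (.star q)))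
  | .dup l => {(.filter .id, l, .filter .id)}

/-- Observation function of the automaton `A(p)`, given the continuation map `κ`
(state `none` is the initial state `0`, state `some ℓ` is the label `ℓ`):
`ε s pk = {pk' | [pk'] ∈ ⟦E⟦k_s⟧⟧ [pk]}`. -/
def obs (κ : Option L → LPol F L) (s : Option L) (pk : Packet F) : Set (Packet F) :=
  {pk' | ((pk', ([] : List (Packet F))) : Hist F) ∈
            polSem (EE (κ s)) ((pk, ([] : List (Packet F))) : Hist F)}

/-- Continuation function of the automaton `A(p)`, given the continuation map `κ`:
`δ s pk = {(pk', ℓ') | ∃ (d, ℓ', k) ∈ D⟦k_s⟧, [pk'] ∈ ⟦d⟧ [pk]}`. -/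
def trans (κ : Option L → LPol F L) (s : Option L) (pk : Packet F) :
    Set (Packet F × Option L) :=
  {q | ∃ l' d k, q.2 = some l' ∧ (d, l', k) ∈ DD (κ s) ∧
        ((q.1, ([] : List (Packet F))) : Hist F) ∈
          polSem d ((pk, ([] : List (Packet F))) : Hist F)}

/-- Acceptance of a guarded string `(pk_in, [pk₁, …, pk_n], pk_out)` from state `s`. -/
def accept (κ : Option L → LPol F L) :
    Option L → Packet F → List (Packet F) → Packet F → Prop
  | s, pkin, [], pkout => pkout ∈ obs κ s pkin
  | s, pkin, pk1 :: w, pkout =>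
      ∃ s', (pk1, s') ∈ trans κ s pkin ∧ accept κ s' pk1 w pkout

end NetKAT

namespace NetKAT

open Relation

section Semantics

variable {F L : Type}

def Pred.Holds : Pred F → Packet F → Prop
  | .id, _ => True
  | .drop, _ => False
  | .test f n, pk => pk f = n
  | .or a b, pk => a.Holds pk ∨ b.Holds pk
  | .and a b, pk => a.Holds pk ∧ b.Holds pk
  | .not a, pk => ¬ a.Holds pk

theorem mem_predSem {a : Pred F} {h x : Hist F} : x ∈ predSem a h ↔ x = h ∧ a.Holds h.1 := by
  induction a generalizing h x with
  | id | drop => simp [predSem, Pred.Holds]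
  | test f n => by_cases hf : h.1 f = n <;> simp [predSem, Pred.Holds, hf]
  | or a b iha ihb => simp only [predSem, Set.mem_union, iha, ihb, Pred.Holds]; tauto
  | and a b iha ihb =>
    simp only [predSem, Set.mem_iUnion₂, iha, ihb, Pred.Holds]
    constructor
    · rintro ⟨_, ⟨rfl, ha⟩, rfl, hb⟩
      exact ⟨rfl, ha, hb⟩
    · rintro ⟨rfl, ha, hb⟩
      exact ⟨_, ⟨rfl, ha⟩, rfl, hb⟩
  | not a iha => simp +contextual [predSem, iha, Pred.Holds]

theorem mem_iUnion_iterRel_iff_reflTransGen {f : Hist F → Set (Hist F)} {h x : Hist F} :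
    x ∈ ⋃ i, iterRel f i h ↔ ReflTransGen (fun a b => b ∈ f a) h x := by
  rw [Set.mem_iUnion]
  constructor
  · rintro ⟨i, hi⟩
    induction i generalizing h with
    | zero => rw [iterRel, Set.mem_singleton_iff] at hi; rw [hi]
    | succ i ih =>
      simp only [iterRel, Set.mem_iUnion₂] at hi
      obtain ⟨y, hy, hyx⟩ := hi
      exact .head hy (ih hyx)
  · intro hx
    induction hx using ReflTransGen.head_induction_on with
    | refl => exact ⟨0, rfl⟩
    | head hy _ ih =>
      obtain ⟨i, hi⟩ := ih
      exact ⟨i + 1, Set.mem_biUnion hy hi⟩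

variable [DecidableEq F]

theorem mem_polSem_seq {q r : LPol F L} {h x : Hist F} :
    x ∈ polSem (.seq q r) h ↔ ∃ y ∈ polSem q h, x ∈ polSem r y := by
  simp [polSem]

theorem mem_polSem_star {q : LPol F L} {h x : Hist F} :
    x ∈ polSem (.star q) h ↔ ReflTransGen (fun a b => b ∈ polSem q a) h x :=
  mem_iUnion_iterRel_iff_reflTransGen

theorem exists_append_of_mem_polSem {q : LPol F L} {h x : Hist F} (hx : x ∈ polSem q h) :
    ∃ v, x.2 = v ++ h.2 ∧ ∀ t, (x.1, v ++ t) ∈ polSem q (h.1, t) := by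
  induction q generalizing h x with
  | filter a =>
    obtain ⟨rfl, ha⟩ := mem_predSem.1 hx
    exact ⟨[], rfl, fun t => mem_predSem.2 ⟨rfl, ha⟩⟩
  | mod f n =>
    rw [polSem, Set.mem_singleton_iff] at hx
    exact ⟨[], by rw [hx]; rfl, fun t => by rw [hx]; rfl⟩
  | union q r ihq ihr =>
    rcases hx with hx | hx
    · obtain ⟨v, hv, ht⟩ := ihq hx
      exact ⟨v, hv, fun t => .inl (ht t)⟩
    · obtain ⟨v, hv, ht⟩ := ihr hx
      exact ⟨v, hv, fun t => .inr (ht t)⟩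
  | seq q r ihq ihr =>
    obtain ⟨y, hy, hyx⟩ := mem_polSem_seq.1 hx
    obtain ⟨v₁, hv₁, ht₁⟩ := ihq hy
    obtain ⟨v₂, hv₂, ht₂⟩ := ihr hyx
    refine ⟨v₂ ++ v₁, by rw [hv₂, hv₁, List.append_assoc], fun t => ?_⟩
    exact mem_polSem_seq.2 ⟨_, ht₁ t, by simpa using ht₂ (v₁ ++ t)⟩
  | star q ihq =>
    rw [mem_polSem_star] at hx
    induction hx using ReflTransGen.head_induction_on with
    | refl => exact ⟨[], rfl, fun t => mem_polSem_star.2 .refl⟩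
    | head hy _ ih =>
      obtain ⟨v₁, hv₁, ht₁⟩ := ihq hy
      obtain ⟨v₂, hv₂, ht₂⟩ := ih
      refine ⟨v₂ ++ v₁, by rw [hv₂, hv₁, List.append_assoc], fun t => ?_⟩
      exact mem_polSem_star.2 (.head (ht₁ t) (mem_polSem_star.1 (by simpa using ht₂ (v₁ ++ t))))
  | dup l =>
    rw [polSem, Set.mem_singleton_iff] at hx
    exact ⟨[h.1], by rw [hx]; rfl, fun t => by rw [hx]; rfl⟩

theorem tail_eq_of_dupFree {q : LPol F L} (hq : q.dupFree) {h x : Hist F}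
    (hx : x ∈ polSem q h) : x.2 = h.2 := by
  induction q generalizing h x with
  | filter a => rw [(mem_predSem.1 hx).1]
  | mod f n => rw [polSem, Set.mem_singleton_iff] at hx; rw [hx]
  | union q r ihq ihr => exact hx.elim (ihq hq.1) (ihr hq.2)
  | seq q r ihq ihr =>
    obtain ⟨y, hy, hyx⟩ := mem_polSem_seq.1 hx
    exact (ihr hq.2 hyx).trans (ihq hq.1 hy)
  | star q ihq =>
    rw [mem_polSem_star] at hx
    induction hx using ReflTransGen.head_induction_on with
    | refl => rfl
    | head hy _ ih => exact ih.trans (ihq hq hy)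
  | dup l => exact hq.elim

theorem mem_polSem_iff_of_dupFree {q : LPol F L} (hq : q.dupFree) {h x : Hist F} :
    x ∈ polSem q h ↔ x.2 = h.2 ∧ (x.1, []) ∈ polSem q (h.1, []) := by
  constructor
  · intro hx
    obtain ⟨v, hv, ht⟩ := exists_append_of_mem_polSem hx
    obtain rfl : v = [] := by simpa [tail_eq_of_dupFree hq hx] using hv
    exact ⟨hv, ht []⟩
  · rintro ⟨hx₂, hx⟩
    obtain ⟨v, hv, ht⟩ := exists_append_of_mem_polSem hx
    obtain rfl : v = [] := by simpa [tail_eq_of_dupFree hq hx] using hv.symm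
    obtain ⟨pk, t⟩ := x
    obtain rfl : t = h.2 := hx₂
    simpa using ht h.2

theorem mem_polSem_of_mem_EE {p : LPol F L} {h x : Hist F} (hx : x ∈ polSem (EE p) h) :
    x ∈ polSem p h := by
  induction p generalizing h x with
  | filter | mod => exact hx
  | dup => simp [EE, polSem, predSem] at hx
  | union q r ihq ihr => exact hx.imp ihq ihr
  | seq q r ihq ihr =>
    obtain ⟨y, hy, hyx⟩ := mem_polSem_seq.1 hx
    exact mem_polSem_seq.2 ⟨y, ihq hy, ihr hyx⟩
  | star q ihq => exact mem_polSem_star.2 (.mono (fun _ _ => ihq) _ _ (mem_polSem_star.1 hx))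

end Semantics

theorem EE_dupFree {F L : Type} (p : LPol F L) : (EE p).dupFree := by
  induction p <;> simp_all [EE, LPol.dupFree]

section Components

variable {F L : Type} [DecidableEq F] [DecidableEq L]

theorem mem_DD_union {q r : LPol F L} {d k : LPol F L} {l : L} :
    (d, l, k) ∈ DD (.union q r) ↔ (d, l, k) ∈ DD q ∨ (d, l, k) ∈ DD r :=
  Finset.mem_union

theorem mem_DD_seq {q r : LPol F L} {d k : LPol F L} {l : L} :
    (d, l, k) ∈ DD (.seq q r) ↔
      (∃ k', (d, l, k') ∈ DD q ∧ k = .seq k' r) ∨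
        ∃ d', (d', l, k) ∈ DD r ∧ d = .seq (EE q) d' := by
  simp only [DD, Finset.mem_union, Finset.mem_image, Prod.exists, Prod.mk.injEq]
  constructor
  · rintro (⟨d, l, k', h, rfl, rfl, rfl⟩ | ⟨d', l, k, h, rfl, rfl, rfl⟩)
    exacts [.inl ⟨k', h, rfl⟩, .inr ⟨d', h, rfl⟩]
  · rintro (⟨k', h, rfl⟩ | ⟨d', h, rfl⟩)
    exacts [.inl ⟨d, l, k', h, rfl, rfl, rfl⟩, .inr ⟨d', l, k, h, rfl, rfl, rfl⟩]

theorem mem_DD_star {q : LPol F L} {d k : LPol F L} {l : L} :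
    (d, l, k) ∈ DD (.star q) ↔
      ∃ d' k', (d', l, k') ∈ DD q ∧ d = .seq (EE (.star q)) d' ∧ k = .seq k' (.star q) := by
  simp only [DD, Finset.mem_image, Prod.exists, Prod.mk.injEq]
  constructor
  · rintro ⟨d', l, k', h, rfl, rfl, rfl⟩
    exact ⟨d', k', h, rfl, rfl⟩
  · rintro ⟨d', k', h, rfl, rfl⟩
    exact ⟨d', l, k', h, rfl, rfl, rfl⟩

theorem mem_DD_dup {l₀ : L} {d k : LPol F L} {l : L} :
    (d, l, k) ∈ DD (.dup l₀ : LPol F L) ↔ d = .filter .id ∧ l = l₀ ∧ k = .filter .id := by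
  simp [DD]

theorem dupFree_of_mem_DD {p d k : LPol F L} {l : L} (hp : (d, l, k) ∈ DD p) : d.dupFree := by
  induction p generalizing d k with
  | filter | mod => simp [DD] at hp
  | union q r ihq ihr => exact (mem_DD_union.1 hp).elim ihq ihr
  | seq q r ihq ihr =>
    rcases mem_DD_seq.1 hp with ⟨k', hq, -⟩ | ⟨d', hr, rfl⟩
    exacts [ihq hq, ⟨EE_dupFree q, ihr hr⟩]
  | star q ihq =>
    obtain ⟨d', k', hq, rfl, -⟩ := mem_DD_star.1 hp
    exact ⟨EE_dupFree (.star q), ihq hq⟩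
  | dup => rw [(mem_DD_dup.1 hp).1]; trivial

theorem mem_labelList_of_mem_DD {p d k : LPol F L} {l : L} (hp : (d, l, k) ∈ DD p) :
    l ∈ labelList p := by
  induction p generalizing d k with
  | filter | mod => simp [DD] at hp
  | union q r ihq ihr =>
    rw [labelList, List.mem_append]
    exact (mem_DD_union.1 hp).imp ihq ihr
  | seq q r ihq ihr =>
    rw [labelList, List.mem_append]
    rcases mem_DD_seq.1 hp with ⟨k', hq, -⟩ | ⟨d', hr, -⟩
    exacts [.inl (ihq hq), .inr (ihr hr)]
  | star q ihq =>
    obtain ⟨d', k', hq, -⟩ := mem_DD_star.1 hp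
    exact ihq hq
  | dup => simp [(mem_DD_dup.1 hp).2.1, labelList]

theorem eq_of_mem_DD_of_mem_DD {p d d' k k' : LPol F L} {l : L} (hnd : (labelList p).Nodup)
    (h : (d, l, k) ∈ DD p) (h' : (d', l, k') ∈ DD p) : d = d' ∧ k = k' := by
  induction p generalizing d d' k k' with
  | filter | mod => simp [DD] at h
  | union q r ihq ihr =>
    obtain ⟨hq, hr, hdisj⟩ := List.nodup_append.1 hnd
    rcases mem_DD_union.1 h with h | h <;> rcases mem_DD_union.1 h' with h' | h'
    · exact ihq hq h h'
    · exact absurd rfl (hdisj _ (mem_labelList_of_mem_DD h) _ (mem_labelList_of_mem_DD h'))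
    · exact absurd rfl (hdisj _ (mem_labelList_of_mem_DD h') _ (mem_labelList_of_mem_DD h))
    · exact ihr hr h h'
  | seq q r ihq ihr =>
    obtain ⟨hq, hr, hdisj⟩ := List.nodup_append.1 hnd
    rcases mem_DD_seq.1 h with ⟨k₁, h₁, rfl⟩ | ⟨d₁, h₁, rfl⟩ <;>
      rcases mem_DD_seq.1 h' with ⟨k₂, h₂, rfl⟩ | ⟨d₂, h₂, rfl⟩
    · obtain ⟨rfl, rfl⟩ := ihq hq h₁ h₂
      exact ⟨rfl, rfl⟩
    · exact absurd rfl (hdisj _ (mem_labelList_of_mem_DD h₁) _ (mem_labelList_of_mem_DD h₂))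
    · exact absurd rfl (hdisj _ (mem_labelList_of_mem_DD h₂) _ (mem_labelList_of_mem_DD h₁))
    · obtain ⟨rfl, rfl⟩ := ihr hr h₁ h₂
      exact ⟨rfl, rfl⟩
  | star q ihq =>
    obtain ⟨d₁, k₁, h₁, rfl, rfl⟩ := mem_DD_star.1 h
    obtain ⟨d₂, k₂, h₂, rfl, rfl⟩ := mem_DD_star.1 h'
    obtain ⟨rfl, rfl⟩ := ihq hnd h₁ h₂
    exact ⟨rfl, rfl⟩
  | dup =>
    obtain ⟨rfl, -, rfl⟩ := mem_DD_dup.1 h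
    obtain ⟨rfl, -, rfl⟩ := mem_DD_dup.1 h'
    exact ⟨rfl, rfl⟩

theorem exists_mem_DD_of_mem_DD_continuation {p d k d' k' : LPol F L} {l l' : L}
    (h : (d, l, k) ∈ DD p) (h' : (d', l', k') ∈ DD k) : ∃ d'', (d'', l', k') ∈ DD p := by
  induction p generalizing d k d' k' with
  | filter | mod => simp [DD] at h
  | union q r ihq ihr =>
    rcases mem_DD_union.1 h with h | h
    · obtain ⟨d'', h''⟩ := ihq h h'
      exact ⟨d'', mem_DD_union.2 (.inl h'')⟩
    · obtain ⟨d'', h''⟩ := ihr h h'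
      exact ⟨d'', mem_DD_union.2 (.inr h'')⟩
  | seq q r ihq ihr =>
    rcases mem_DD_seq.1 h with ⟨k₁, h₁, rfl⟩ | ⟨d₁, h₁, -⟩
    · rcases mem_DD_seq.1 h' with ⟨k₂, h₂, rfl⟩ | ⟨d₂, h₂, -⟩
      · obtain ⟨d'', h''⟩ := ihq h₁ h₂
        exact ⟨d'', mem_DD_seq.2 (.inl ⟨k₂, h'', rfl⟩)⟩
      · exact ⟨_, mem_DD_seq.2 (.inr ⟨d₂, h₂, rfl⟩)⟩
    · obtain ⟨d'', h''⟩ := ihr h₁ h'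
      exact ⟨_, mem_DD_seq.2 (.inr ⟨d'', h'', rfl⟩)⟩
  | star q ihq =>
    obtain ⟨d₁, k₁, h₁, -, rfl⟩ := mem_DD_star.1 h
    rcases mem_DD_seq.1 h' with ⟨k₂, h₂, rfl⟩ | ⟨d₂, h₂, -⟩
    · obtain ⟨d'', h''⟩ := ihq h₁ h₂
      exact ⟨_, mem_DD_star.2 ⟨d'', k₂, h'', rfl, rfl⟩⟩
    · exact ⟨d₂, h₂⟩
  | dup =>
    obtain ⟨-, -, rfl⟩ := mem_DD_dup.1 h
    simp [DD] at h'

end Components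

section Decomposition

variable {F L : Type} [DecidableEq F] [DecidableEq L]

theorem mem_polSem_of_mem_DD {p d k : LPol F L} {l : L} (hp : (d, l, k) ∈ DD p) {h y x : Hist F}
    (hy : y ∈ polSem d h) (hx : x ∈ polSem k (y.1, y.1 :: y.2)) : x ∈ polSem p h := by
  induction p generalizing d k h y x with
  | filter | mod => simp [DD] at hp
  | union q r ihq ihr => exact (mem_DD_union.1 hp).imp (ihq · hy hx) (ihr · hy hx)
  | seq q r ihq ihr =>
    rcases mem_DD_seq.1 hp with ⟨k', hq, rfl⟩ | ⟨d', hr, rfl⟩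
    · obtain ⟨z, hz, hzx⟩ := mem_polSem_seq.1 hx
      exact mem_polSem_seq.2 ⟨z, ihq hq hy hz, hzx⟩
    · obtain ⟨z, hz, hzy⟩ := mem_polSem_seq.1 hy
      exact mem_polSem_seq.2 ⟨z, mem_polSem_of_mem_EE hz, ihr hr hzy hx⟩
  | star q ihq =>
    obtain ⟨d', k', hq, rfl, rfl⟩ := mem_DD_star.1 hp
    obtain ⟨z, hz, hzy⟩ := mem_polSem_seq.1 hy
    obtain ⟨u, hu, hux⟩ := mem_polSem_seq.1 hx
    exact mem_polSem_star.2 <| (mem_polSem_star.1 (mem_polSem_of_mem_EE hz)).trans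
      (.head (ihq hq hzy hu) (mem_polSem_star.1 hux))
  | dup =>
    obtain ⟨rfl, -, rfl⟩ := mem_DD_dup.1 hp
    obtain rfl := (mem_predSem.1 hy).1
    exact (mem_predSem.1 hx).1

/-- `(y.1, y.1 :: y.2)` is the effect of `dup` on `y`, so the second disjunct reads
`x ∈ ⟦d · dup^ℓ · k⟧ h`. -/
theorem mem_EE_or_exists_mem_DD {p : LPol F L} {h x : Hist F} (hx : x ∈ polSem p h) :
    x ∈ polSem (EE p) h ∨
      ∃ d l k, (d, l, k) ∈ DD p ∧ ∃ y ∈ polSem d h, x ∈ polSem k (y.1, y.1 :: y.2) := by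
  induction p generalizing h x with
  | filter | mod => exact .inl hx
  | dup l =>
    refine .inr ⟨.filter .id, l, .filter .id, mem_DD_dup.2 ⟨rfl, rfl, rfl⟩, h,
      mem_predSem.2 ⟨rfl, trivial⟩, mem_predSem.2 ⟨hx, trivial⟩⟩
  | union q r ihq ihr =>
    rcases hx with hx | hx
    · rcases ihq hx with hE | ⟨d, l, k, hq, hd⟩
      exacts [.inl (.inl hE), .inr ⟨d, l, k, mem_DD_union.2 (.inl hq), hd⟩]
    · rcases ihr hx with hE | ⟨d, l, k, hr, hd⟩
      exacts [.inl (.inr hE), .inr ⟨d, l, k, mem_DD_union.2 (.inr hr), hd⟩]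
  | seq q r ihq ihr =>
    obtain ⟨y, hy, hyx⟩ := mem_polSem_seq.1 hx
    rcases ihq hy with hyE | ⟨d, l, k, hq, z, hz, hzy⟩
    · rcases ihr hyx with hxE | ⟨d, l, k, hr, z, hz, hzx⟩
      · exact .inl (mem_polSem_seq.2 ⟨y, hyE, hxE⟩)
      · exact .inr ⟨_, l, k, mem_DD_seq.2 (.inr ⟨d, hr, rfl⟩), z,
          mem_polSem_seq.2 ⟨y, hyE, hz⟩, hzx⟩
    · exact .inr ⟨d, l, _, mem_DD_seq.2 (.inl ⟨k, hq, rfl⟩), z, hz,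
        mem_polSem_seq.2 ⟨y, hzy, hyx⟩⟩
  | star q ihq =>
    rw [mem_polSem_star] at hx
    induction hx using ReflTransGen.head_induction_on with
    | refl => exact .inl (mem_polSem_star.2 .refl)
    | head hy hyx ih =>
      rcases ihq hy with hyE | ⟨d, l, k, hq, z, hz, hzy⟩
      · rcases ih with hxE | ⟨d, l, k, hd, z, hz, hzx⟩
        · exact .inl (mem_polSem_star.2 (.head hyE (mem_polSem_star.1 hxE)))
        · obtain ⟨d', k', -, rfl, rfl⟩ := mem_DD_star.1 hd
          obtain ⟨u, hu, huz⟩ := mem_polSem_seq.1 hz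
          exact .inr ⟨_, l, _, hd, z,
            mem_polSem_seq.2 ⟨u, mem_polSem_star.2 (.head hyE (mem_polSem_star.1 hu)), huz⟩, hzx⟩
      · exact .inr ⟨_, l, _, mem_DD_star.2 ⟨d, k, hq, rfl, rfl⟩, z,
          mem_polSem_seq.2 ⟨_, mem_polSem_star.2 .refl, hz⟩,
          mem_polSem_seq.2 ⟨_, hzy, mem_polSem_star.2 hyx⟩⟩

theorem mem_polSem_iff_mem_EE_or_exists_mem_DD {p : LPol F L} {h x : Hist F} :
    x ∈ polSem p h ↔ x ∈ polSem (EE p) h ∨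
      ∃ d l k, (d, l, k) ∈ DD p ∧ ∃ y ∈ polSem d h, x ∈ polSem k (y.1, y.1 :: y.2) := by
  refine ⟨mem_EE_or_exists_mem_DD, ?_⟩
  rintro (hE | ⟨d, l, k, hp, y, hy, hx⟩)
  exacts [mem_polSem_of_mem_EE hE, mem_polSem_of_mem_DD hp hy hx]

end Decomposition

section Automaton

variable {F L : Type} [DecidableEq F] [DecidableEq L]

theorem mem_polSem_iff_mem_EE_of_tail_eq {k : LPol F L} {pkin pkout : Packet F}
    {t : List (Packet F)} :
    (pkout, t) ∈ polSem k (pkin, t) ↔ (pkout, []) ∈ polSem (EE k) (pkin, []) := by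
  rw [mem_polSem_iff_mem_EE_or_exists_mem_DD, mem_polSem_iff_of_dupFree (EE_dupFree k)]
  refine ⟨?_, fun hE => .inl ⟨rfl, hE⟩⟩
  rintro (⟨-, hE⟩ | ⟨d, l, k', hd, y, hy, hx⟩)
  · exact hE
  · obtain ⟨v, hv, -⟩ := exists_append_of_mem_polSem hx
    have hlen := congrArg List.length hv
    simp only [tail_eq_of_dupFree (dupFree_of_mem_DD hd) hy, List.length_append,
      List.length_cons] at hlen
    omega

theorem mem_polSem_append_cons_iff {k : LPol F L} {pkin pk pkout : Packet F}
    {u t : List (Packet F)} :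
    (pkout, u ++ pk :: t) ∈ polSem k (pkin, t) ↔
      ∃ d l k', (d, l, k') ∈ DD k ∧ (pk, []) ∈ polSem d (pkin, []) ∧
        (pkout, u ++ pk :: t) ∈ polSem k' (pk, pk :: t) := by
  rw [mem_polSem_iff_mem_EE_or_exists_mem_DD]
  constructor
  · rintro (hE | ⟨d, l, k', hd, ⟨pk', t'⟩, hy, hx⟩)
    · have hlen := congrArg List.length (tail_eq_of_dupFree (EE_dupFree k) hE)
      simp only [List.length_append, List.length_cons] at hlen
      omega
    · obtain ⟨rfl, hy⟩ := (mem_polSem_iff_of_dupFree (dupFree_of_mem_DD hd)).1 hy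
      obtain ⟨v, hv, -⟩ := exists_append_of_mem_polSem hx
      obtain rfl : pk' = pk := by
        simpa using (List.append_inj' hv.symm rfl).2
      exact ⟨d, l, k', hd, hy, hx⟩
  · rintro ⟨d, l, k', hd, hy, hx⟩
    exact .inr ⟨d, l, k', hd, (pk, t), (mem_polSem_iff_of_dupFree (dupFree_of_mem_DD hd)).2
      ⟨rfl, hy⟩, hx⟩

theorem continuation_eq_of_mem_DD {p : LPol F L} (hnd : (labelList p).Nodup)
    {κ : Option L → LPol F L} (hκ0 : κ none = p)
    (hκ : ∀ l ∈ labelList p, ∃ d, (d, l, κ (some l)) ∈ DD p)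
    {s : Option L} (hs : ∀ l, s = some l → l ∈ labelList p)
    {d k : LPol F L} {l : L} (h : (d, l, k) ∈ DD (κ s)) :
    l ∈ labelList p ∧ k = κ (some l) := by
  obtain ⟨d', hp⟩ : ∃ d', (d', l, k) ∈ DD p := by
    cases s with
    | none => exact ⟨d, hκ0 ▸ h⟩
    | some l₀ =>
      obtain ⟨d₀, h₀⟩ := hκ l₀ (hs l₀ rfl)
      exact exists_mem_DD_of_mem_DD_continuation h₀ h
  have hl := mem_labelList_of_mem_DD hp
  obtain ⟨d'', hκl⟩ := hκ l hl
  exact ⟨hl, (eq_of_mem_DD_of_mem_DD hnd hp hκl).2⟩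

end Automaton

variable {F L : Type} [DecidableEq F] [DecidableEq L]

theorem automaton_soundness_strong_general (p : LPol F L)
    (hnd : (labelList p).Nodup)
    (κ : Option L → LPol F L) (hκ0 : κ none = p)
    (hκ : ∀ l ∈ labelList p, ∃ d, (d, l, κ (some l)) ∈ DD p)
    (s : Option L) (hs : ∀ l, s = some l → l ∈ labelList p)
    (pkin pkout : Packet F) (w : List (Packet F)) (h' : List (Packet F)) :
    ((pkout, w.reverse ++ h') : Hist F) ∈ polSem (κ s) ((pkin, h') : Hist F)
      ↔ accept κ s pkin w pkout := by
  induction w generalizing s pkin h' with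
  | nil => exact mem_polSem_iff_mem_EE_of_tail_eq
  | cons pk w ih =>
    rw [List.reverse_cons, List.append_assoc, List.singleton_append, mem_polSem_append_cons_iff]
    simp only [accept, trans, Set.mem_ofPred_eq]
    constructor
    · rintro ⟨d, l, k, hd, hpk, hk⟩
      obtain ⟨hl, rfl⟩ := continuation_eq_of_mem_DD hnd hκ0 hκ hs hd
      exact ⟨some l, ⟨l, d, _, rfl, hd, hpk⟩, (ih (some l) (by rintro _ ⟨⟩; exact hl) pk _).1 hk⟩
    · rintro ⟨_, ⟨l, d, k, rfl, hd, hpk⟩, hacc⟩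
      obtain ⟨hl, rfl⟩ := continuation_eq_of_mem_DD hnd hκ0 hκ hs hd
      exact ⟨d, l, _, hd, hpk, (ih (some l) (by rintro _ ⟨⟩; exact hl) pk _).2 hacc⟩

/-- **Strengthened automaton soundness** (the induction invariant of the Program
Automaton Soundness proof): for every state `s` of `A(p)` (i.e. `s` is the start state
`none`, or `some ℓ` for a label `ℓ` occurring in `p`) and every tail `h'`, the history
`(pk_out :: pk_n :: ⋯ :: pk₁) ++ h'` belongs to `⟦k_s⟧ (pk_in :: h')` iff
`accept s (pk_in, [pk₁, …, pk_n], pk_out)` holds. -/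
theorem automaton_soundness_strong [Fintype F] (p : LPol F L)
    (hnd : (labelList p).Nodup)
    (κ : Option L → LPol F L) (hκ0 : κ none = p)
    (hκ : ∀ l ∈ labelList p, ∃ d, (d, l, κ (some l)) ∈ DD p)
    (s : Option L) (hs : ∀ l, s = some l → l ∈ labelList p)
    (pkin pkout : Packet F) (w : List (Packet F)) (h' : List (Packet F)) :
    ((pkout, w.reverse ++ h') : Hist F) ∈ polSem (κ s) ((pkin, h') : Hist F)
      ↔ accept κ s pkin w pkout :=
  automaton_soundness_strong_general p hnd κ hκ0 hκ s hs pkin pkout w h'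

end NetKAT
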